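/- Let (W,S) be any Coxeter system. If w ∈ W is fully commutative and w = u·v with ℓ(w) = ℓ(u) + ℓ(v) (where ℓ denotes Coxeter length), then both u and v are fully commutative. -/

import Mathlib

/-! ### Generalities: commutation moves and fully commutative elements -/

/-- A single commutation move on words in the alphabet `B`: swap two adjacent
letters `s`, `t` with `M s t = 2`. -/
def CommMove {B : Type*} (M : CoxeterMatrix B) (w₁ w₂ : List B) : Prop :=
  ∃ (u v : List B) (s t : B), M s t = 2 ∧ w₁ = u ++ s :: t :: v ∧ w₂ = u ++ t :: s :: v

/-- Two words are commutation equivalent if they are related by a (possibly empty)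
sequence of commutation moves. -/
def CommEquiv {B : Type*} (M : CoxeterMatrix B) : List B → List B → Prop :=
  Relation.ReflTransGen (CommMove M)

/-- An element of a Coxeter group is *fully commutative* if any two of its reduced
words are related by a sequence of commutation moves. -/
def IsFC {B W : Type*} [Group W] {M : CoxeterMatrix B} (cs : CoxeterSystem M W) (w : W) : Prop :=
  ∀ u v : List B, cs.IsReduced u → cs.IsReduced v →
    cs.wordProd u = w → cs.wordProd v = w → CommEquiv M u v

/-! ### The Coxeter matrix of affine type D̃_{n+2} -/

/-- Half of the adjacency relation in the Coxeter graph of affine type `D̃_{n+2}`. -/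
def DtildeAdjHalf (n i j : ℕ) : Prop :=
  (i = 0 ∧ j = 2) ∨ (i = 1 ∧ j = 2) ∨ (2 ≤ i ∧ i < n ∧ j = i + 1) ∨
  (i = n ∧ (j = n + 1 ∨ j = n + 2))

/-- Adjacency in the Coxeter graph of affine type `D̃_{n+2}`, with vertices `0, …, n+2`:
the edges are `{0,2}`, `{1,2}`, `{i,i+1}` for `2 ≤ i ≤ n-1`, `{n,n+1}` and `{n,n+2}`. -/
def DtildeAdj (n i j : ℕ) : Prop := DtildeAdjHalf n i j ∨ DtildeAdjHalf n j i

instance (n i j : ℕ) : Decidable (DtildeAdjHalf n i j) := by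
  unfold DtildeAdjHalf; infer_instance

instance (n i j : ℕ) : Decidable (DtildeAdj n i j) := by unfold DtildeAdj; infer_instance

private lemma dtildeAdj_symm {n i j : ℕ} : DtildeAdj n i j ↔ DtildeAdj n j i := or_comm

/-- The Coxeter matrix of affine type `D̃_{n+2}`: `m i i = 1`, `m i j = 3` if `i`, `j` are
adjacent in the Coxeter graph, and `m i j = 2` otherwise. -/
def DtildeMatrix (n : ℕ) : CoxeterMatrix (Fin (n + 3)) where
  M i j := if i = j then 1 else if DtildeAdj n i.val j.val then 3 else 2
  isSymm := by
    refine Matrix.IsSymm.ext fun j i => ?_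
    show (if i = j then 1 else if DtildeAdj n i.val j.val then 3 else 2) =
      (if j = i then 1 else if DtildeAdj n j.val i.val then 3 else 2)
    by_cases h : i = j
    · simp [h]
    · have h' : (j : Fin (n+3)) ≠ i := Ne.symm h
      rw [if_neg h', if_neg h]
      by_cases ha : DtildeAdj n i.val j.val
      · rw [if_pos ha, if_pos (dtildeAdj_symm.mp ha)]
      · rw [if_neg ha, if_neg (fun hb => ha (dtildeAdj_symm.mp hb))]
  diagonal := fun i => by simp
  off_diagonal := fun i j hij => by
    rw [if_neg hij]
    split <;> simp

/-! ### The generalized Temperley–Lieb algebra TL(D̃_{n+2}) -/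

/-- The base ring `ℤ[δ]`. -/
abbrev Rδ : Type := Polynomial ℤ

/-- The element `δ ∈ ℤ[δ]`. -/
noncomputable def δpoly : Rδ := Polynomial.X

/-- The defining relations of the generalized Temperley–Lieb algebra of type `D̃_{n+2}`:
(d1) `bᵢ² = δ bᵢ`; (d2) `bᵢ bⱼ = bⱼ bᵢ` if `m(sᵢ,sⱼ) = 2`;
(d3) `bᵢ bⱼ bᵢ = bᵢ` if `m(sᵢ,sⱼ) = 3`. -/
inductive TLRel (n : ℕ) : FreeAlgebra Rδ (Fin (n + 3)) → FreeAlgebra Rδ (Fin (n + 3)) → Prop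
  | sq (i : Fin (n + 3)) :
      TLRel n (FreeAlgebra.ι Rδ i * FreeAlgebra.ι Rδ i) (δpoly • FreeAlgebra.ι Rδ i)
  | comm (i j : Fin (n + 3)) (h : DtildeMatrix n i j = 2) :
      TLRel n (FreeAlgebra.ι Rδ i * FreeAlgebra.ι Rδ j) (FreeAlgebra.ι Rδ j * FreeAlgebra.ι Rδ i)
  | braid (i j : Fin (n + 3)) (h : DtildeMatrix n i j = 3) :
      TLRel n (FreeAlgebra.ι Rδ i * FreeAlgebra.ι Rδ j * FreeAlgebra.ι Rδ i) (FreeAlgebra.ι Rδ i)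

/-- The generalized Temperley–Lieb algebra `TL(D̃_{n+2})` as a `ℤ[δ]`-algebra, presented by
generators `b₀, …, b_{n+2}` and the relations (d1)–(d3). -/
abbrev TL (n : ℕ) : Type := RingQuot (TLRel n)

/-- The generator `bᵢ` of `TL(D̃_{n+2})`. -/
noncomputable def bGen (n : ℕ) (i : Fin (n + 3)) : TL n :=
  RingQuot.mkAlgHom Rδ (TLRel n) (FreeAlgebra.ι Rδ i)

/-- The monomial `b_{i₁} b_{i₂} ⋯ b_{i_k}` of `TL(D̃_{n+2})` associated to a word. -/
noncomputable def bWord (n : ℕ) (l : List (Fin (n + 3))) : TL n := (l.map (bGen n)).prod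

/-- The monomial `b_w ∈ TL(D̃_{n+2})` associated to a group element `w`, computed from a
chosen reduced word for `w` (independent of the choice when `w` is fully commutative). -/
noncomputable def bElt {n : ℕ} {W : Type*} [Group W] (cs : CoxeterSystem (DtildeMatrix n) W)
    (w : W) : TL n :=
  bWord n (Classical.choose (cs.exists_reduced_word' w))
/-!
Fix a reduced word `b` for `v`. For reduced words `a`, `a'` of `u`, additivity of length makes
`a ++ b` and `a' ++ b` reduced words of `w`, hence commutation equivalent since `w` is fully
commutative; so it suffices that commutation equivalence is cancellative. To cancel a first
letter `s`, track the deletion of an occurrence of `s` commuting with every letter to its left: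
such a deletion can be transported along commutation moves, and in a word `s :: y` the only
occurrence of this kind is the leading one, because `m(s, s) = 1 ≠ 2`.
-/

section CommEquiv

variable {B : Type*} {M : CoxeterMatrix B}

theorem CommMove.cons (t : B) {a b : List B} (h : CommMove M a b) :
    CommMove M (t :: a) (t :: b) := by
  obtain ⟨u, v, s, s', hst, rfl, rfl⟩ := h
  exact ⟨t :: u, v, s, s', hst, rfl, rfl⟩

theorem CommMove.reverse {a b : List B} (h : CommMove M a b) :
    CommMove M a.reverse b.reverse := by
  obtain ⟨u, v, s, t, hst, rfl, rfl⟩ := h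
  exact ⟨v.reverse, u.reverse, t, s, M.symmetric s t ▸ hst, by simp, by simp⟩

theorem CommEquiv.cons (t : B) {a b : List B} (h : CommEquiv M a b) :
    CommEquiv M (t :: a) (t :: b) :=
  Relation.ReflTransGen.lift (r := CommMove M) _ (fun _ _ => CommMove.cons t) _ _ h

theorem CommEquiv.reverse {a b : List B} (h : CommEquiv M a b) :
    CommEquiv M a.reverse b.reverse :=
  Relation.ReflTransGen.lift (r := CommMove M) _ (fun _ _ => CommMove.reverse) _ _ h

/-- `CommErase M s x y`: `y` is `x` with one occurrence of `s` deleted, where `s` commutes with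
every letter before that occurrence. -/
inductive CommErase (M : CoxeterMatrix B) (s : B) : List B → List B → Prop
  | head (q : List B) : CommErase M s (s :: q) q
  | cons (t : B) {x y : List B} (h : M s t = 2) :
      CommErase M s x y → CommErase M s (t :: x) (t :: y)

theorem CommErase.exists_of_commMove {s : B} {x y x' : List B} (hd : CommErase M s x y)
    (hm : CommMove M x x') : ∃ y', CommErase M s x' y' ∧ CommEquiv M y y' := by
  induction hd generalizing x' with
  | head q =>
    obtain ⟨u, v, c, d, hcd, hx, rfl⟩ := hm
    cases u with
    | nil =>
      obtain ⟨rfl, rfl⟩ := List.cons.inj hx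
      exact ⟨d :: v, .cons d hcd (.head v), .refl⟩
    | cons t u =>
      obtain ⟨rfl, rfl⟩ := List.cons.inj hx
      exact ⟨u ++ d :: c :: v, .head _, .single ⟨u, v, c, d, hcd, rfl, rfl⟩⟩
  | @cons t x y hst hd ih =>
    obtain ⟨u, v, c, d, hcd, hx, rfl⟩ := hm
    cases u with
    | nil =>
      obtain ⟨rfl, rfl⟩ := List.cons.inj hx
      cases hd with
      | head _ => exact ⟨_, .head _, .refl⟩
      | @cons _ _ y₀ hsd hd₀ =>
        exact ⟨d :: t :: y₀, .cons d hsd (.cons t hst hd₀),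
          .single ⟨[], y₀, t, d, hcd, rfl, rfl⟩⟩
    | cons t u =>
      obtain ⟨rfl, rfl⟩ := List.cons.inj hx
      obtain ⟨y', hdy', hyy'⟩ := ih ⟨u, v, c, d, hcd, rfl, rfl⟩
      exact ⟨t :: y', .cons t hst hdy', hyy'.cons t⟩

theorem CommErase.exists_of_commEquiv {s : B} {x y z : List B} (hd : CommErase M s x y)
    (he : CommEquiv M x z) : ∃ y', CommErase M s z y' ∧ CommEquiv M y y' := by
  induction he with
  | refl => exact ⟨y, hd, .refl⟩
  | tail _ hm ih =>
    obtain ⟨y', hd', hyy'⟩ := ih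
    obtain ⟨y'', hd'', hy'y''⟩ := hd'.exists_of_commMove hm
    exact ⟨y'', hd'', hyy'.trans hy'y''⟩

theorem CommEquiv.of_cons {s : B} {a b : List B} (h : CommEquiv M (s :: a) (s :: b)) :
    CommEquiv M a b := by
  obtain ⟨b', hd, hab'⟩ := (CommErase.head a).exists_of_commEquiv h
  cases hd with
  | head => exact hab'
  | cons _ hss _ => exact absurd (M.diagonal s ▸ hss) (by decide)

theorem CommEquiv.cancel_left (c : List B) {a b : List B} (h : CommEquiv M (c ++ a) (c ++ b)) :
    CommEquiv M a b := by
  induction c with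
  | nil => exact h
  | cons t c ih => exact ih h.of_cons

theorem CommEquiv.cancel_right (c : List B) {a b : List B} (h : CommEquiv M (a ++ c) (b ++ c)) :
    CommEquiv M a b := by
  have h' : CommEquiv M (c.reverse ++ a.reverse) (c.reverse ++ b.reverse) := by
    simpa using h.reverse
  simpa using (h'.cancel_left c.reverse).reverse

end CommEquiv

namespace CoxeterSystem

variable {B W : Type*} [Group W] {M : CoxeterMatrix B} {cs : CoxeterSystem M W}

theorem IsReduced.append_of_length_mul {a b : List B} (ha : cs.IsReduced a)
    (hb : cs.IsReduced b)
    (hlen : cs.length (cs.wordProd a * cs.wordProd b) =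
      cs.length (cs.wordProd a) + cs.length (cs.wordProd b)) :
    cs.IsReduced (a ++ b) := by
  rw [IsReduced, wordProd_append, hlen, ha.eq, hb.eq, List.length_append]

theorem isFC_left_of_isFC_mul {u v : W} (hw : IsFC cs (u * v))
    (hlen : cs.length (u * v) = cs.length u + cs.length v) : IsFC cs u := by
  obtain ⟨b, hb, rfl⟩ := cs.exists_isReduced v
  intro a₁ a₂ ha₁ ha₂ hpa₁ hpa₂
  subst hpa₁
  refine CommEquiv.cancel_right b <|
    hw _ _ (ha₁.append_of_length_mul hb hlen) (ha₂.append_of_length_mul hb ?_) ?_ ?_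
  all_goals simp [wordProd_append, hpa₂, hlen]

theorem isFC_right_of_isFC_mul {u v : W} (hw : IsFC cs (u * v))
    (hlen : cs.length (u * v) = cs.length u + cs.length v) : IsFC cs v := by
  obtain ⟨a, ha, rfl⟩ := cs.exists_isReduced u
  intro b₁ b₂ hb₁ hb₂ hpb₁ hpb₂
  subst hpb₁
  refine CommEquiv.cancel_left a <|
    hw _ _ (ha.append_of_length_mul hb₁ hlen) (ha.append_of_length_mul hb₂ ?_) ?_ ?_
  all_goals simp [wordProd_append, hpb₂, hlen]

end CoxeterSystem

/-- In any Coxeter system, if `w` is fully commutative and `w = u * v`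
with `ℓ(w) = ℓ(u) + ℓ(v)`, then `u` and `v` are fully commutative. -/
theorem isFC_of_mul_of_length_add {B W : Type*} [Group W] {M : CoxeterMatrix B}
    (cs : CoxeterSystem M W) (w u v : W) (hw : IsFC cs w) (huv : w = u * v)
    (hlen : cs.length w = cs.length u + cs.length v) :
    IsFC cs u ∧ IsFC cs v := by
  subst huv
  exact ⟨cs.isFC_left_of_isFC_mul hw hlen, cs.isFC_right_of_isFC_mul hw hlen⟩
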